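/- arXiv:1603.00343 — 2 statements merged into one kernel-verified Lean document; each statement's English description precedes it below -/
import Mathlib

section
/- The 6×6 real symmetric matrix H with nonzero entries H₁₁ = 1/I₁, H₂₂ = 1/I₂, H₃₃ = 1/I₃, H₁₆ = H₆₁ = −2ω, H₃₄ = H₄₃ = 2ω, H₄₄ = 4(ω²I₂ + 2(I₃−I₂)(k₂−k₃)), H₅₅ = 8(I₃−I₁)(k₁−k₃), H₆₆ = 4(ω²I₂ + 2(I₁−I₂)(k₂−k₁)), where I₁, I₂, I₃ > 0, is positive definite if and only if (I₃−I₁)(k₁−k₃) > 0, (I₂−I₁)(ω² − 2(k₂−k₁)) > 0, and (I₂−I₃)(ω² − 2(k₂−k₃)) > 0. -/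
/-!
Completing the square in the two coupled pairs of coordinates `(x₀, x₅)` and `(x₂, x₃)`
factors the Hessian as `Pᵀ D P` with `P` unipotent and `D` diagonal. Positive definiteness
is invariant under this congruence, so it reduces to positivity of the six pivots of `D`:
`1/I₁`, `1/I₂`, `1/I₃` and, as Schur complements of the `2 × 2` blocks, multiples of the
three products in the statement.
-/

open Matrix

noncomputable section

def spacecraftHessian (I₁ I₂ I₃ ω k₁ k₂ k₃ : ℝ) : Matrix (Fin 6) (Fin 6) ℝ :=
  !![1/I₁, 0,    0,    0,    0, -2*ω;
     0,    1/I₂, 0,    0,    0, 0;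
     0,    0,    1/I₃, 2*ω,  0, 0;
     0,    0,    2*ω,  4*(ω^2*I₂ + 2*(I₃-I₂)*(k₂-k₃)), 0, 0;
     0,    0,    0,    0,    8*(I₃-I₁)*(k₁-k₃), 0;
     -2*ω, 0,    0,    0,    0, 4*(ω^2*I₂ + 2*(I₁-I₂)*(k₂-k₁))]

def spacecraftHessianPivots (I₁ I₂ I₃ ω k₁ k₂ k₃ : ℝ) : Fin 6 → ℝ :=
  ![1/I₁, 1/I₂, 1/I₃, 4*((I₂-I₃)*(ω^2 - 2*(k₂-k₃))), 8*((I₃-I₁)*(k₁-k₃)),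
    4*((I₂-I₁)*(ω^2 - 2*(k₂-k₁)))]

def spacecraftHessianShear (I₁ I₃ ω : ℝ) : Matrix (Fin 6) (Fin 6) ℝ :=
  !![1, 0, 0, 0,       0, -2*ω*I₁;
     0, 1, 0, 0,       0, 0;
     0, 0, 1, 2*ω*I₃,  0, 0;
     0, 0, 0, 1,       0, 0;
     0, 0, 0, 0,       1, 0;
     0, 0, 0, 0,       0, 1]

theorem det_spacecraftHessianShear (I₁ I₃ ω : ℝ) : (spacecraftHessianShear I₁ I₃ ω).det = 1 := by
  simp [spacecraftHessianShear, det_succ_row_zero, Fin.sum_univ_succ]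

theorem spacecraftHessian_eq_star_mul_diagonal_mul {I₁ I₃ : ℝ} (hI₁ : I₁ ≠ 0) (hI₃ : I₃ ≠ 0)
    (I₂ ω k₁ k₂ k₃ : ℝ) :
    spacecraftHessian I₁ I₂ I₃ ω k₁ k₂ k₃ =
      star (spacecraftHessianShear I₁ I₃ ω) *
        diagonal (spacecraftHessianPivots I₁ I₂ I₃ ω k₁ k₂ k₃) * spacecraftHessianShear I₁ I₃ ω := by
  ext i j
  fin_cases i <;> fin_cases j <;>
    simp [spacecraftHessian, spacecraftHessianPivots, spacecraftHessianShear, mul_apply,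
      Fin.sum_univ_succ] <;>
    field_simp <;> ring

end

theorem spacecraft_hessian_posDef_iff
    (I₁ I₂ I₃ ω k₁ k₂ k₃ : ℝ) (hI₁ : 0 < I₁) (hI₂ : 0 < I₂) (hI₃ : 0 < I₃) :
    (!![1/I₁, 0,    0,    0,    0, -2*ω;
        0,    1/I₂, 0,    0,    0, 0;
        0,    0,    1/I₃, 2*ω,  0, 0;
        0,    0,    2*ω,  4*(ω^2*I₂ + 2*(I₃-I₂)*(k₂-k₃)), 0, 0;
        0,    0,    0,    0,    8*(I₃-I₁)*(k₁-k₃), 0;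
        -2*ω, 0,    0,    0,    0, 4*(ω^2*I₂ + 2*(I₁-I₂)*(k₂-k₁))] :
      Matrix (Fin 6) (Fin 6) ℝ).PosDef ↔
    ((I₃-I₁)*(k₁-k₃) > 0 ∧ (I₂-I₁)*(ω^2 - 2*(k₂-k₁)) > 0 ∧
     (I₂-I₃)*(ω^2 - 2*(k₂-k₃)) > 0) := by
  have hShear : IsUnit (spacecraftHessianShear I₁ I₃ ω) := by
    simp [isUnit_iff_isUnit_det, det_spacecraftHessianShear]
  change (spacecraftHessian I₁ I₂ I₃ ω k₁ k₂ k₃).PosDef ↔ _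
  rw [spacecraftHessian_eq_star_mul_diagonal_mul hI₁.ne' hI₃.ne',
    hShear.posDef_star_left_conjugate_iff, posDef_diagonal_iff]
  simp [Fin.forall_fin_succ, spacecraftHessianPivots, hI₁, hI₂, hI₃]
  tauto
end

section
/- Let m, l, m₁, m₂, I₁₁, I₁₂, I₂₂, I₃, m₃ be real numbers with m₁, m₂, m₃, I₃ > 0, I₁₁ > 0, I₂₂ > 0, I₁₁I₂₂ − I₁₂² > 0. Define the 6×6 block matrix N = [[J, D],[Dᵀ, M]] where M = diag(m₁, m₂, m₃), J = [[I₁₁, I₁₂, 0],[I₁₂, I₂₂, 0],[0,0,I₃]], and D = [[0, −ml, 0],[ml, 0, 0],[0,0,0]]. Then N is positive definite if and only if m₁I₂₂ > m²l², m₂I₁₁ > m²l², and k := m₁m₂(I₁₁I₂₂ − I₁₂²) − m²l²(m₁I₂₂ + m₂I₁₁) + m⁴l⁴ > 0. -/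
/-!
Since the mass block `M` is positive definite, `N` is positive definite iff its Schur complement
`J - D M⁻¹ Dᵀ = !![I₁₁ - m²l²/m₂, I₁₂, 0; I₁₂, I₂₂ - m²l²/m₁, 0; 0, 0, I₃]` is. As `I₃ > 0`, this
is Sylvester's criterion for the upper `2 × 2` block, whose determinant is `k / (m₁ m₂)`.
-/

open Matrix

namespace Matrix

theorem posDef_fromBlocks₂₂_iff {m n R : Type*} [Fintype m] [Fintype n] [DecidableEq n]
    [CommRing R] [PartialOrder R] [StarRing R] [StarOrderedRing R]
    (A : Matrix m m R) (B : Matrix m n R) {D : Matrix n n R} (hD : D.PosDef) [Invertible D] :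
    (fromBlocks A B Bᴴ D).PosDef ↔ (A - B * D⁻¹ * Bᴴ).PosDef := by
  rw [posDef_iff_dotProduct_mulVec, posDef_iff_dotProduct_mulVec,
    IsHermitian.fromBlocks₂₂ _ _ hD.1]
  refine and_congr_right fun _ => ⟨fun h x hx => ?_, fun h v hv => ?_⟩
  · have hne : x ⊕ᵥ -((D⁻¹ * Bᴴ) *ᵥ x) ≠ 0 := fun h0 => hx (congrArg (· ∘ Sum.inl) h0)
    simpa [dotProduct_mulVec, schur_complement_eq₂₂ _ _ _ _ hD.1] using h hne
  · rw [← Sum.elim_comp_inl_inr v, dotProduct_mulVec, schur_complement_eq₂₂ _ _ _ _ hD.1,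
      ← dotProduct_mulVec, ← dotProduct_mulVec]
    by_cases hx : v ∘ Sum.inl = 0
    · have hy : v ∘ Sum.inr ≠ 0 := fun hy => hv <| by
        ext (i | i); exacts [congrFun hx i, congrFun hy i]
      simpa [hx] using hD.dotProduct_mulVec_pos hy
    · exact add_pos_of_nonneg_of_pos (hD.posSemidef.dotProduct_mulVec_nonneg _) (h hx)

theorem posDef_fin_three_blockDiagonal_iff {K : Type*} [CommRing K] [LinearOrder K]
    [IsStrictOrderedRing K] [StarRing K] [TrivialStar K] {a b c d : K} :
    (!![a, b, 0; b, c, 0; 0, 0, d]).PosDef ↔ 0 < a ∧ 0 < c ∧ b ^ 2 < a * c ∧ 0 < d := by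
  have hQ : ∀ x : Fin 3 → K, star x ⬝ᵥ (!![a, b, 0; b, c, 0; 0, 0, d] *ᵥ x) =
      a * x 0 ^ 2 + 2 * b * x 0 * x 1 + c * x 1 ^ 2 + d * x 2 ^ 2 := fun x => by
    simp only [dotProduct, mulVec, Fin.sum_univ_three, star_trivial, Pi.star_apply, of_apply,
      cons_val', cons_val_fin_one, cons_val_zero, cons_val_one, cons_val]
    ring
  rw [posDef_iff_dotProduct_mulVec]
  simp only [hQ]
  constructor
  · rintro ⟨-, h⟩
    have ha : 0 < a := by simpa using h (x := ![1, 0, 0]) (by simp)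
    have hc : 0 < c := by simpa using h (x := ![0, 1, 0]) (by simp)
    have hd : 0 < d := by simpa using h (x := ![0, 0, 1]) (by simp)
    have hac : 0 < a * (a * c - b ^ 2) := by
      have := h (x := ![b, -a, 0]) (by simp [ha.ne'])
      simp only [cons_val_zero, cons_val_one, cons_val] at this
      linarith
    exact ⟨ha, hc, sub_pos.mp (pos_of_mul_pos_right hac ha.le), hd⟩
  · rintro ⟨ha, -, hb, hd⟩
    refine ⟨by ext i j; fin_cases i <;> fin_cases j <;> simp, fun x hx => ?_⟩
    have hsquares : a * (a * x 0 ^ 2 + 2 * b * x 0 * x 1 + c * x 1 ^ 2 + d * x 2 ^ 2) =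
        (a * x 0 + b * x 1) ^ 2 + (a * c - b ^ 2) * x 1 ^ 2 + a * d * x 2 ^ 2 := by
      ring
    refine pos_of_mul_pos_right (hsquares ▸ ?_) ha.le
    have hb' : 0 < a * c - b ^ 2 := sub_pos.mpr hb
    generalize a * c - b ^ 2 = e at hb' ⊢
    by_cases h1 : x 1 = 0
    · by_cases h2 : x 2 = 0
      · have h0 : x 0 ≠ 0 := fun h0 => hx (by ext i; fin_cases i <;> assumption)
        simp only [h1, h2, mul_zero, add_zero, zero_pow two_ne_zero]
        positivity
      · positivity
    · positivity

theorem inv_diagonal_of_ne_zero {n K : Type*} [Fintype n] [DecidableEq n] [Field K]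
    {d : n → K} (hd : ∀ i, d i ≠ 0) : (diagonal d)⁻¹ = diagonal d⁻¹ :=
  inv_eq_left_inv <| by
    rw [diagonal_mul_diagonal, ← diagonal_one]
    exact congrArg diagonal (funext fun i => inv_mul_cancel₀ (hd i))

theorem skew_e₃_mul_diagonal_mul_conjTranspose {R : Type*} [CommRing R] [StarRing R]
    [TrivialStar R] (x : R) (d : Fin 3 → R) :
    !![0, -x, 0; x, 0, 0; 0, 0, 0] * diagonal d * !![0, -x, 0; x, 0, 0; 0, 0, 0]ᴴ =
      diagonal ![x ^ 2 * d 1, x ^ 2 * d 0, 0] := by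
  ext i j
  fin_cases i <;> fin_cases j <;>
    simp [vecMul, dotProduct, Fin.sum_univ_three, sq, mul_comm, mul_left_comm]

end Matrix

theorem inertia_matrix_posDef_iff_general
    (m l m₁ m₂ m₃ I₁₁ I₁₂ I₂₂ I₃ : ℝ)
    (hm₁ : 0 < m₁) (hm₂ : 0 < m₂) (hm₃ : 0 < m₃) (hI₃ : 0 < I₃) :
    (Matrix.fromBlocks
        (!![I₁₁, I₁₂, 0; I₁₂, I₂₂, 0; 0, 0, I₃])
        (!![0, -m*l, 0; m*l, 0, 0; 0, 0, 0])
        (!![0, -m*l, 0; m*l, 0, 0; 0, 0, 0])ᵀ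
        (!![m₁, 0, 0; 0, m₂, 0; 0, 0, m₃])).PosDef ↔
      (m₁*I₂₂ > m^2*l^2 ∧ m₂*I₁₁ > m^2*l^2 ∧
       m₁*m₂*(I₁₁*I₂₂ - I₁₂^2) - m^2*l^2*(m₁*I₂₂ + m₂*I₁₁) + m^4*l^4 > 0) := by
  have hd : ∀ i, 0 < ![m₁, m₂, m₃] i := fun i => by fin_cases i <;> assumption
  have hM : (diagonal ![m₁, m₂, m₃]).PosDef := posDef_diagonal_iff.mpr hd
  have := hM.isUnit.invertible
  have hSchur : !![I₁₁, I₁₂, 0; I₁₂, I₂₂, 0; 0, 0, I₃] -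
      !![0, -m*l, 0; m*l, 0, 0; 0, 0, 0] * (diagonal ![m₁, m₂, m₃])⁻¹ *
        (!![0, -m*l, 0; m*l, 0, 0; 0, 0, 0])ᴴ =
      !![I₁₁ - (m*l)^2/m₂, I₁₂, 0; I₁₂, I₂₂ - (m*l)^2/m₁, 0; 0, 0, I₃] := by
    rw [inv_diagonal_of_ne_zero fun i => (hd i).ne', neg_mul,
      skew_e₃_mul_diagonal_mul_conjTranspose]
    ext i j
    fin_cases i <;> fin_cases j <;> simp [div_eq_mul_inv]
  have hk : (I₁₁ - (m*l)^2/m₂) * (I₂₂ - (m*l)^2/m₁) - I₁₂^2 =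
      (m₁*m₂*(I₁₁*I₂₂ - I₁₂^2) - m^2*l^2*(m₁*I₂₂ + m₂*I₁₁) + m^4*l^4) / (m₁*m₂) := by
    field_simp
    ring
  rw [← diagonal_vec3, ← conjTranspose_eq_transpose_of_trivial, posDef_fromBlocks₂₂_iff _ _ hM,
    hSchur, posDef_fin_three_blockDiagonal_iff, ← sub_pos (b := I₁₂ ^ 2), hk,
    div_pos_iff_of_pos_right (by positivity), sub_pos, sub_pos, div_lt_iff₀ hm₂, div_lt_iff₀ hm₁]
  exact ⟨fun ⟨h₁, h₂, h₃, _⟩ => ⟨by linarith, by linarith, h₃⟩,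
    fun ⟨h₁, h₂, h₃⟩ => ⟨by linarith, by linarith, h₃, hI₃⟩⟩

theorem inertia_matrix_posDef_iff
    (m l m₁ m₂ m₃ I₁₁ I₁₂ I₂₂ I₃ : ℝ)
    (hm₁ : 0 < m₁) (hm₂ : 0 < m₂) (hm₃ : 0 < m₃) (hI₃ : 0 < I₃)
    (hI₁₁ : 0 < I₁₁) (hI₂₂ : 0 < I₂₂) (hdet : I₁₁*I₂₂ - I₁₂^2 > 0) :
    (Matrix.fromBlocks
        (!![I₁₁, I₁₂, 0; I₁₂, I₂₂, 0; 0, 0, I₃])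
        (!![0, -m*l, 0; m*l, 0, 0; 0, 0, 0])
        (!![0, -m*l, 0; m*l, 0, 0; 0, 0, 0])ᵀ
        (!![m₁, 0, 0; 0, m₂, 0; 0, 0, m₃])).PosDef ↔
      (m₁*I₂₂ > m^2*l^2 ∧ m₂*I₁₁ > m^2*l^2 ∧
       m₁*m₂*(I₁₁*I₂₂ - I₁₂^2) - m^2*l^2*(m₁*I₂₂ + m₂*I₁₁) + m^4*l^4 > 0) :=
  inertia_matrix_posDef_iff_general m l m₁ m₂ m₃ I₁₁ I₁₂ I₂₂ I₃ hm₁ hm₂ hm₃ hI₃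
end
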